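/- arXiv:2408.14021 — 2 statements merged into one kernel-verified Lean document; each statement's English description precedes it below -/
import Mathlib

section
/- Let F be a field, let V and W be finite-dimensional F-vector spaces, and let (X, Y, i, j) be a stable ADHM datum on (V, W). Then for every pair of scalars x, y ∈ F, the linear map V → V ⊕ V ⊕ W given by v ↦ ((X − x·id_V)(v), (Y − y·id_V)(v), j(v)) is injective. -/
/-- Stability for an ADHM datum `(X, Y, i, j)` on `(V, W)`: every subspace `V' ⊆ V`
invariant under `X` and `Y` and contained in `ker j` is zero. -/
def ADHMStable {F V W : Type*} [Field F]
    [AddCommGroup V] [Module F V] [AddCommGroup W] [Module F W]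
    (X Y : V →ₗ[F] V) (j : V →ₗ[F] W) : Prop :=
  ∀ V' : Submodule F V, (∀ v ∈ V', X v ∈ V') → (∀ v ∈ V', Y v ∈ V') →
    V' ≤ LinearMap.ker j → V' = ⊥

/-- Let `(X, Y, i, j)` be a stable ADHM datum on finite-dimensional vector spaces
`(V, W)` over a field `F`, i.e. `[X, Y] + i ∘ j = 0` and the stability condition holds.
Then for all scalars `x, y : F`, the map `V → V ⊕ V ⊕ W`,
`v ↦ ((X - x)v, (Y - y)v, j v)`, is injective. -/
theorem adhm_monad_first_map_injective
    {F V W : Type*} [Field F]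
    [AddCommGroup V] [Module F V] [FiniteDimensional F V]
    [AddCommGroup W] [Module F W] [FiniteDimensional F W]
    (X Y : V →ₗ[F] V) (i : W →ₗ[F] V) (j : V →ₗ[F] W)
    (hADHM : X ∘ₗ Y - Y ∘ₗ X + i ∘ₗ j = 0)
    (hstable : ADHMStable X Y j) (x y : F) :
    Function.Injective (fun v : V => ((X v - x • v, Y v - y • v), j v)) := by
  have hKbot :
      (LinearMap.ker (X - x • LinearMap.id) ⊓
        (LinearMap.ker (Y - y • LinearMap.id) ⊓ LinearMap.ker j)) = ⊥ := by
    apply hstable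
    · rintro v ⟨h1, h2, h3⟩
      simp only [LinearMap.mem_ker, LinearMap.sub_apply, LinearMap.smul_apply,
        LinearMap.id_coe, id_eq, sub_eq_zero, Submodule.mem_inf, SetLike.mem_coe] at h1 h2 h3 ⊢
      refine ⟨?_, ?_, ?_⟩
      · rw [h1, map_smul, h1]
      · rw [h1, map_smul, h2, smul_comm]
      · rw [h1, map_smul, h3, smul_zero]
    · rintro v ⟨h1, h2, h3⟩
      simp only [LinearMap.mem_ker, LinearMap.sub_apply, LinearMap.smul_apply,
        LinearMap.id_coe, id_eq, sub_eq_zero, Submodule.mem_inf, SetLike.mem_coe] at h1 h2 h3 ⊢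
      refine ⟨?_, ?_, ?_⟩
      · rw [h2, map_smul, h1, smul_comm]
      · rw [h2, map_smul, h2]
      · rw [h2, map_smul, h3, smul_zero]
    · rintro v ⟨_, _, h3⟩
      exact h3
  intro a b hab
  simp only [Prod.mk.injEq] at hab
  obtain ⟨⟨e1, e2⟩, e3⟩ := hab
  have hmem : a - b ∈ (LinearMap.ker (X - x • LinearMap.id) ⊓
      (LinearMap.ker (Y - y • LinearMap.id) ⊓ LinearMap.ker j)) := by
    rw [Submodule.mem_inf, Submodule.mem_inf]
    refine ⟨?_, ?_, ?_⟩ <;>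
      simp only [LinearMap.mem_ker, LinearMap.sub_apply, LinearMap.smul_apply,
        LinearMap.id_coe, id_eq, map_sub, smul_sub, sub_eq_zero]
    · exact e1
    · exact e2
    · exact e3
  rw [hKbot, Submodule.mem_bot, sub_eq_zero] at hmem
  exact hmem
end

section
/- Let r be a positive integer and let const and θ₀ be integers. Let P : ℤ → ℕ → Prop be a predicate satisfying: (i) for every m ∈ ℤ and every natural number l with l < r, P(m, l) holds if and only if const + 2·r·m ≥ θ₀; and (ii) for every m ∈ ℤ and every natural number l with l ≥ r, P(m, l) holds if and only if P(m − l + r, l − r) holds. Then for every m ∈ ℤ and every natural number l, letting t be the remainder of l upon division by r, P(m, l) holds if and only if const + 2·r·m + l·(r − l) − t·(r − t) ≥ θ₀ (as an inequality of integers). -/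
/-- Let `r > 0`, `const`, `θ₀` be integers and `P : ℤ → ℕ → Prop` a predicate such that
(i) for `l < r`, `P m l ↔ const + 2*r*m ≥ θ₀`, and (ii) for `l ≥ r`,
`P m l ↔ P (m - l + r) (l - r)`.  Then for all `m : ℤ` and `l : ℕ`, with `t = l % r`,
`P m l ↔ const + 2*r*m + l*(r - l) - t*(r - t) ≥ θ₀`. -/
theorem degeneracy_nonempty_criterion
    (r : ℕ) (hr : 0 < r) (const θ₀ : ℤ) (P : ℤ → ℕ → Prop)
    (h1 : ∀ (m : ℤ) (l : ℕ), l < r → (P m l ↔ θ₀ ≤ const + 2 * r * m))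
    (h2 : ∀ (m : ℤ) (l : ℕ), r ≤ l → (P m l ↔ P (m - l + r) (l - r))) :
    ∀ (m : ℤ) (l : ℕ),
      P m l ↔ θ₀ ≤ const + 2 * r * m + l * ((r : ℤ) - l) -
        (l % r : ℕ) * ((r : ℤ) - (l % r : ℕ)) := by
  intro m l
  induction l using Nat.strong_induction_on generalizing m with
  | _ l ih =>
    rcases lt_or_ge l r with hl | hl
    · rw [Nat.mod_eq_of_lt hl, h1 m l hl]
      constructor <;> intro h <;> linarith
    · have hlt : l - r < l := Nat.sub_lt (hr.trans_le hl) hr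
      rw [h2 m l hl, ih (l - r) hlt (m - l + r)]
      have hmod : (l - r) % r = l % r := by
        conv_rhs => rw [← Nat.sub_add_cancel hl]
        rw [Nat.add_mod_right]
      rw [hmod]
      have hcast : ((l - r : ℕ) : ℤ) = (l : ℤ) - r := by
        exact Int.ofNat_sub hl
      rw [hcast]
      constructor <;> intro h <;> push_cast at * <;> linarith [h]
end
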